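/- arXiv:2210.02858 — 2 statements merged into one kernel-verified Lean document; each statement's English description precedes it below -/
import Mathlib

section
/- For real numbers β ≥ λ > 0 and s a nonnegative integer, ∫_{-π}^{π} (cos²θ/β² + sin²θ/λ²)^s dθ = (2π λ / β^(1+2s)) · ₂F₁(1/2, 1+s; 1; 1 - λ²/β²). -/
open Real Finset

/-- Pochhammer symbol (rising factorial) on the reals. -/
noncomputable def poch (a : ℝ) (n : ℕ) : ℝ := (ascPochhammer ℝ n).eval a

/-- Gauss hypergeometric series `₂F₁(a, b; c; z)`. -/
noncomputable def twoF1 (a b c z : ℝ) : ℝ :=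
  ∑' n : ℕ, poch a n * poch b n / poch c n * z ^ n / (Nat.factorial n)

lemma cb_succ_eq (n : ℕ) : Nat.centralBinom (n+1) = 2*(2*n+1) * catalan n := by
  have h1 := Nat.succ_mul_centralBinom_succ n
  have h2 := succ_mul_catalan_eq_centralBinom n
  have : (n+1) * Nat.centralBinom (n+1) = (n+1) * (2*(2*n+1) * catalan n) := by
    rw [h1, ← h2]; ring
  exact Nat.eq_of_mul_eq_mul_left (Nat.succ_pos n) this

lemma lemB (n : ℕ) : 2 * ∑ j ∈ range (n+1), catalan j * Nat.centralBinom (n-j)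
    = Nat.centralBinom (n+1) := by
  have key : ∀ j ∈ range (n+1), catalan j * Nat.centralBinom (n-j)
      = (n - j + 1) * (catalan j * catalan (n-j)) := by
    intro j hj
    rw [← succ_mul_catalan_eq_centralBinom (n-j)]; ring
  rw [Finset.sum_congr rfl key]
  have hrefl : ∑ j ∈ range (n+1), (n - j + 1) * (catalan j * catalan (n-j))
      = ∑ j ∈ range (n+1), (j + 1) * (catalan j * catalan (n-j)) := by
    rw [← Finset.sum_range_reflect]
    apply Finset.sum_congr rfl
    intro j hj
    simp only [Finset.mem_range] at hj
    have hj' : j ≤ n := Nat.lt_succ_iff.mp hj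
    have h1 : n - (n - j) = j := Nat.sub_sub_self hj'
    have h2 : n + 1 - 1 - j = n - j := by omega
    rw [h2, h1]
    ring
  have hsum : 2 * ∑ j ∈ range (n+1), (n - j + 1) * (catalan j * catalan (n-j))
      = (n+2) * ∑ j ∈ range (n+1), catalan j * catalan (n-j) := by
    rw [two_mul]
    nth_rewrite 2 [hrefl]
    rw [← Finset.sum_add_distrib, Finset.mul_sum]
    apply Finset.sum_congr rfl
    intro j hj
    simp only [Finset.mem_range] at hj
    have hj' : j ≤ n := Nat.lt_succ_iff.mp hj
    have : n - j + 1 + (j + 1) = n + 2 := by omega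
    rw [← add_mul, this]
  rw [hsum]
  have hcat : ∑ j ∈ range (n+1), catalan j * catalan (n-j) = catalan (n+1) := by
    rw [catalan_succ', Finset.Nat.sum_antidiagonal_eq_sum_range_succ (f := fun i j => catalan i * catalan j)]
  rw [hcat, succ_mul_catalan_eq_centralBinom]

lemma lemA (n : ℕ) : ∑ i ∈ range (n+1), Nat.centralBinom i * Nat.centralBinom (n-i) = 4^n := by
  induction n with
  | zero => simp [Nat.centralBinom]
  | succ n ih =>
    have split : ∑ i ∈ range (n+2), Nat.centralBinom i * Nat.centralBinom (n+1-i)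
        = (∑ i ∈ range (n+1), Nat.centralBinom (i+1) * Nat.centralBinom (n-i))
          + Nat.centralBinom (n+1) := by
      rw [Finset.sum_range_succ' (fun i => Nat.centralBinom i * Nat.centralBinom (n+1-i)) (n+1)]
      simp [Nat.centralBinom]
    have key : (∑ i ∈ range (n+1), Nat.centralBinom (i+1) * Nat.centralBinom (n-i))
        + 2 * ∑ j ∈ range (n+1), catalan j * Nat.centralBinom (n-j)
        = 4 * ∑ i ∈ range (n+1), Nat.centralBinom i * Nat.centralBinom (n-i) := by
      rw [Finset.mul_sum, Finset.mul_sum, ← Finset.sum_add_distrib]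
      apply Finset.sum_congr rfl
      intro i hi
      rw [cb_succ_eq]
      have h2 : Nat.centralBinom i = (i+1) * catalan i := (succ_mul_catalan_eq_centralBinom i).symm
      rw [h2]; ring
    rw [split, ← lemB n]
    omega

noncomputable def qq (m : ℕ) : ℝ := (Nat.centralBinom m : ℝ) / 4 ^ m

lemma qq_zero : qq 0 = 1 := by simp [qq, Nat.centralBinom]

lemma qq_succ (m : ℕ) : qq (m+1) * (2*m+2) = qq m * (2*m+1) := by
  have h := Nat.succ_mul_centralBinom_succ m
  have h4 : (4:ℝ)^(m+1) ≠ 0 := by positivity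
  have hR : ((m:ℝ)+1) * (Nat.centralBinom (m+1) : ℝ) = 2*(2*m+1) * Nat.centralBinom m := by
    exact_mod_cast h
  unfold qq
  rw [pow_succ]
  rw [div_mul_eq_mul_div, div_mul_eq_mul_div, div_eq_div_iff (by positivity) (by positivity)]
  linear_combination (2*(4:ℝ)^m) * hR

lemma qq_pos (m : ℕ) : 0 < qq m := by
  have : (0:ℝ) < Nat.centralBinom m := by exact_mod_cast Nat.centralBinom_pos m
  unfold qq
  positivity

lemma qq_le_one (m : ℕ) : qq m ≤ 1 := by
  induction m with
  | zero => rw [qq_zero]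
  | succ m ih =>
    have h := qq_succ m
    have h1 : (0:ℝ) < 2*m+2 := by positivity
    have := qq_pos m
    nlinarith

lemma poch_zero (a : ℝ) : poch a 0 = 1 := by simp [poch]

lemma poch_succ (a : ℝ) (n : ℕ) : poch a (n+1) = poch a n * (a + n) := by
  simp [poch, ascPochhammer_succ_eval]

lemma poch_succ_left (a : ℝ) (n : ℕ) : poch a (n+1) = a * poch (a+1) n := by
  simp [poch, ascPochhammer_succ_left, Polynomial.eval_mul, Polynomial.eval_comp]

lemma poch_one_eval (n : ℕ) : poch 1 n = n.factorial := by
  induction n with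
  | zero => simp [poch_zero]
  | succ n ih => rw [poch_succ, ih, Nat.factorial_succ]; push_cast; ring

lemma poch_half (m : ℕ) : poch (1/2) m = qq m * m.factorial := by
  induction m with
  | zero => simp [poch_zero, qq_zero]
  | succ m ih =>
    rw [poch_succ, ih, Nat.factorial_succ]
    have h := qq_succ m
    push_cast
    nlinarith [h]

lemma poch_nat_fac (s n : ℕ) : poch (1 + s) n * s.factorial = (s + n).factorial := by
  induction n with
  | zero => simp [poch_zero]
  | succ n ih =>
    rw [poch_succ, ← Nat.add_assoc, Nat.factorial_succ]
    push_cast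
    nlinarith [ih]

lemma poch_nat_choose (s n : ℕ) : poch (1 + s) n = ((s + n).choose n : ℝ) * n.factorial := by
  have h1 := poch_nat_fac s n
  have h2 : (s+n).choose n * n.factorial * s.factorial = (s+n).factorial := by
    have := Nat.choose_mul_factorial_mul_factorial (n := s+n) (k := n) (by omega)
    simpa [Nat.add_sub_cancel_left, mul_comm, mul_assoc, mul_left_comm] using this
  have h2R : ((s+n).choose n : ℝ) * n.factorial * s.factorial = (s+n).factorial := by
    exact_mod_cast h2
  have hs : (s.factorial : ℝ) ≠ 0 := by exact_mod_cast s.factorial_ne_zero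
  have h3 : poch (1 + s) n * s.factorial = ((s + n).choose n : ℝ) * n.factorial * s.factorial := by
    rw [h1, h2R]
  exact mul_right_cancel₀ hs h3

lemma poch_nonneg {a : ℝ} (ha : 0 ≤ a) (m : ℕ) : 0 ≤ poch a m := by
  induction m with
  | zero => simp [poch_zero]
  | succ m ih => rw [poch_succ]; positivity

lemma poch_le {a b : ℝ} (ha : 0 ≤ a) (hab : a ≤ b) (m : ℕ) : poch a m ≤ poch b m := by
  induction m with
  | zero => simp [poch_zero]
  | succ m ih =>
    rw [poch_succ, poch_succ]
    have h1 : (0:ℝ) ≤ a + m := by positivity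
    have := poch_nonneg ha m
    have := poch_nonneg (le_trans ha hab) m
    nlinarith

lemma poch_half_add_le (k m : ℕ) : poch (1/2 + k) m ≤ ((m + k).choose k : ℝ) * m.factorial := by
  have h1 : poch (1/2 + k) m ≤ poch (1 + k) m := by
    apply poch_le (by positivity)
    norm_num
  have h2 : poch (1 + k) m = ((k + m).choose m : ℝ) * m.factorial := poch_nat_choose k m
  have h3 : (k + m).choose m = (m + k).choose k := by
    rw [← Nat.choose_symm_add, Nat.add_comm]
  rw [h2, h3] at h1
  exact h1

-- ratio lemma
lemma ratio_lem (k m : ℕ) : ((m+k).choose k : ℝ) * qq (m+k) * m.factorial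
    = qq k * poch (1/2 + k) m := by
  induction m with
  | zero => simp [poch_zero]
  | succ m ih =>
    have hch : ((m+k+1).choose k : ℝ) * (m+1) = ((m+k).choose k) * (m+k+1) := by
      have h := Nat.add_one_mul_choose_eq (m+k) m
      have hsym : (m+k).choose m = (m+k).choose k := by
        rw [← Nat.choose_symm_add, Nat.add_comm]
      have hsym2 : (m+k+1).choose (m+1) = (m+k+1).choose k := by
        rw [← Nat.choose_symm (show m+1 ≤ m+k+1 by omega)]
        congr 1
        omega
      rw [hsym, hsym2] at h
      exact_mod_cast h.symm.trans (mul_comm _ _)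
    have hq := qq_succ (m+k)
    have hp : poch (1/2 + k) (m+1) = poch (1/2 + k) m * (1/2 + k + m) := poch_succ _ m
    have hfac : ((m+1).factorial : ℝ) = (m+1) * m.factorial := by
      rw [Nat.factorial_succ]; push_cast; ring
    have hne : (2*(m:ℝ)+2*k+2) ≠ 0 := by positivity
    have hq' : qq (m+k+1) = qq (m+k) * (2*(m+k)+1) / (2*(m+k)+2) := by
      field_simp
      push_cast at hq ⊢
      linarith [hq]
    have goal : ((m+k+1).choose k : ℝ) * qq (m+k+1) * (m+1).factorial
        = qq k * poch (1/2 + k) (m+1) := by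
      rw [hp, hfac]
      push_cast at hq
      linear_combination (qq (m+k+1) * (m.factorial:ℝ)) * hch
        + ((((m+k).choose k : ℝ)) * m.factorial / 2) * hq
        + ((2*(m:ℝ)+2*k+1)/2) * ih
    simpa [Nat.add_right_comm] using goal

-- sin integral
lemma sin_int (k : ℕ) : ∫ θ in (-π)..π, Real.sin θ ^ (2*k) = 2 * π * qq k := by
  induction k with
  | zero => simp [qq_zero]; ring
  | succ k ih =>
    have h := integral_sin_pow (a := -π) (b := π) (2*k)
    have h2 : 2*(k+1) = 2*k+2 := by ring
    rw [h2, h]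
    simp [Real.sin_pi]
    rw [ih]
    have hq := qq_succ k
    have hne : (2*(k:ℝ)+2) ≠ 0 := by positivity
    field_simp
    push_cast at hq ⊢
    nlinarith [hq, Real.pi_pos]

-- Vandermonde
lemma vandermonde_real (s n : ℕ) : (((s+n).choose n : ℕ) : ℝ)
    = ∑ k ∈ range (s+1), ((s.choose k : ℕ) : ℝ) * ((n.choose k : ℕ) : ℝ) := by
  have hN : (s+n).choose n = ∑ k ∈ range (s+1), s.choose k * n.choose k := by
    rw [Nat.add_choose_eq]
    rw [Finset.Nat.sum_antidiagonal_eq_sum_range_succ (f := fun i j => s.choose i * n.choose j)]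
    have e1 : ∑ i ∈ range (n+1), s.choose i * n.choose (n - i)
        = ∑ i ∈ range (n+1), s.choose i * n.choose i := by
      apply Finset.sum_congr rfl
      intro i hi
      simp only [Finset.mem_range] at hi
      rw [Nat.choose_symm (by omega)]
    rw [Nat.succ_eq_add_one, e1]
    -- extend both sums to range (s+n+1)
    have e2 : ∑ i ∈ range (n+1), s.choose i * n.choose i
        = ∑ i ∈ range (s+n+1), s.choose i * n.choose i := by
      apply Finset.sum_subset (by apply Finset.range_subset_range.mpr; omega)
      intro x _ hx
      simp only [Finset.mem_range, not_lt] at hx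
      rw [Nat.choose_eq_zero_of_lt (show n < x by omega)]
      ring
    have e3 : ∑ i ∈ range (s+1), s.choose i * n.choose i
        = ∑ i ∈ range (s+n+1), s.choose i * n.choose i := by
      apply Finset.sum_subset (by apply Finset.range_subset_range.mpr; omega)
      intro x _ hx
      simp only [Finset.mem_range, not_lt] at hx
      rw [Nat.choose_eq_zero_of_lt (show s < x by omega)]
      ring
    rw [e2, ← e3]
  rw [hN]
  push_cast
  rfl

section Series

lemma summable_choose_geom {z : ℝ} (hz0 : 0 ≤ z) (hz1 : z < 1) (k : ℕ) : Summable (fun m : ℕ => ((m+k).choose k : ℝ) * z ^ m) := by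
  have hz : ‖z‖ < 1 := by rw [Real.norm_eq_abs, abs_lt]; constructor <;> linarith
  exact_mod_cast summable_choose_mul_geometric_of_norm_lt_one k hz

/-- the `G k` series terms -/
noncomputable def gterm (z : ℝ) (k m : ℕ) : ℝ := poch (1/2 + k) m / m.factorial * z ^ m

lemma gterm_nonneg {z : ℝ} (hz0 : 0 ≤ z) (k m : ℕ) : 0 ≤ gterm z k m := by
  have h1 := poch_nonneg (a := 1/2 + (k:ℝ)) (by positivity) m
  have h2 : (0:ℝ) ≤ poch (1/2+(k:ℝ)) m / m.factorial := by positivity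
  exact mul_nonneg h2 (pow_nonneg hz0 m)

lemma gterm_le {z : ℝ} (hz0 : 0 ≤ z) (k m : ℕ) : gterm z k m ≤ ((m+k).choose k : ℝ) * z ^ m := by
  unfold gterm
  have h1 := poch_half_add_le k m
  have h2 : (0:ℝ) < m.factorial := by exact_mod_cast m.factorial_pos
  have h3 : poch (1/2+k) m / m.factorial ≤ ((m+k).choose k : ℝ) := by
    rw [div_le_iff₀ h2]; exact h1
  exact mul_le_mul_of_nonneg_right h3 (pow_nonneg hz0 m)

lemma summable_gterm {z : ℝ} (hz0 : 0 ≤ z) (hz1 : z < 1) (k : ℕ) : Summable (gterm z k) := by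
  exact Summable.of_nonneg_of_le (fun m => gterm_nonneg hz0 k m) (fun m => gterm_le hz0 k m)
    (summable_choose_geom hz0 hz1 k)

lemma summable_mul_gterm {z : ℝ} (hz0 : 0 ≤ z) (hz1 : z < 1) (k : ℕ) : Summable (fun m : ℕ => (m : ℝ) * gterm z k m) := by
  refine Summable.of_nonneg_of_le
    (fun m => mul_nonneg (by positivity) (gterm_nonneg hz0 k m))
    (fun m => ?_)
    ((summable_choose_geom hz0 hz1 (k+1)).mul_left ((k:ℝ)+1))
  show (m : ℝ) * gterm z k m ≤ ((k:ℝ)+1) * (((m+(k+1)).choose (k+1) : ℝ) * z ^ m)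
  have h1 : (m : ℝ) * gterm z k m ≤ (m : ℝ) * (((m+k).choose k : ℝ) * z ^ m) :=
    mul_le_mul_of_nonneg_left (gterm_le hz0 k m) (by positivity)
  refine h1.trans ?_
  have hN : (m : ℝ) * ((m+k).choose k : ℝ) ≤ ((k:ℝ)+1) * ((m+(k+1)).choose (k+1) : ℝ) := by
    have h := Nat.add_one_mul_choose_eq (m+k) k
    have hle : m * ((m+k).choose k) ≤ (k+1) * ((m+(k+1)).choose (k+1)) := by
      calc m * ((m+k).choose k) ≤ (m+k+1) * ((m+k).choose k) := by
            apply Nat.mul_le_mul_right; omega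
        _ = (m+k+1).choose (k+1) * (k+1) := h
        _ = (k+1) * ((m+(k+1)).choose (k+1)) := by
              rw [mul_comm, show m+k+1 = m+(k+1) from by omega]
    exact_mod_cast hle
  calc (m : ℝ) * (((m+k).choose k : ℝ) * z ^ m)
      = ((m : ℝ) * ((m+k).choose k : ℝ)) * z ^ m := by ring
    _ ≤ (((k:ℝ)+1) * ((m+(k+1)).choose (k+1) : ℝ)) * z ^ m := by
        exact mul_le_mul_of_nonneg_right hN (pow_nonneg hz0 m)
    _ = ((k:ℝ)+1) * (((m+(k+1)).choose (k+1) : ℝ) * z ^ m) := by ring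

lemma G_rec {z : ℝ} (hz0 : 0 ≤ z) (hz1 : z < 1) (k : ℕ) :
    ∑' m, gterm z k m = (1 - z) * ∑' m, gterm z (k+1) m := by
  set a : ℝ := 1/2 + k with ha
  have hapos : 0 < a := by positivity
  have hgt1 : ∀ m, gterm z (k+1) m = poch (a+1) m / m.factorial * z ^ m := by
    intro m; unfold gterm; rw [show ((1:ℝ)/2 + ((k+1 : ℕ):ℝ)) = a + 1 by rw [ha]; push_cast; ring]
  have hterm : ∀ m : ℕ, a * gterm z (k+1) m = a * gterm z k m + m * gterm z k m := by
    intro m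
    rw [hgt1]
    unfold gterm
    rw [← ha]
    have hp1 : poch a (m+1) = poch a m * (a + m) := poch_succ a m
    have hp2 : poch a (m+1) = a * poch (a+1) m := poch_succ_left a m
    have hkey : a * poch (a+1) m = poch a m * (a + m) := by rw [← hp2, hp1]
    have hf : (m.factorial : ℝ) ≠ 0 := by exact_mod_cast m.factorial_ne_zero
    field_simp
    linear_combination (z ^ m) * hkey
  have hshift : ∑' m : ℕ, (m : ℝ) * gterm z k m = z * a * ∑' m, gterm z (k+1) m := by
    rw [Summable.tsum_eq_zero_add (summable_mul_gterm hz0 hz1 k)]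
    simp only [Nat.cast_zero, zero_mul, zero_add]
    rw [← tsum_mul_left]
    apply tsum_congr
    intro j
    have hp2 : poch a (j+1) = a * poch (a+1) j := poch_succ_left a j
    rw [hgt1]
    unfold gterm
    rw [← ha, hp2, Nat.factorial_succ, pow_succ]
    have hf : (j.factorial : ℝ) ≠ 0 := by exact_mod_cast j.factorial_ne_zero
    push_cast
    field_simp
  have hsum : a * ∑' m, gterm z (k+1) m = a * ∑' m, gterm z k m + z * a * ∑' m, gterm z (k+1) m := by
    rw [← hshift, ← tsum_mul_left, ← tsum_mul_left (a := a) (f := gterm z k)]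
    rw [← Summable.tsum_add ((summable_gterm hz0 hz1 k).mul_left a) (summable_mul_gterm hz0 hz1 k)]
    exact tsum_congr hterm
  have key : a * (∑' m, gterm z k m) = a * ((1-z) * ∑' m, gterm z (k+1) m) := by
    linear_combination (-1 : ℝ) * hsum
  exact mul_left_cancel₀ (ne_of_gt hapos) key

lemma qq_conv {n : ℕ} : ∑ i ∈ range (n+1), qq i * qq (n-i) = 1 := by
  have h := lemA n
  have h4 : ((4:ℝ)^n) ≠ 0 := by positivity
  have : ∑ i ∈ range (n+1), qq i * qq (n-i) = (∑ i ∈ range (n+1),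
      (Nat.centralBinom i : ℝ) * (Nat.centralBinom (n-i) : ℝ)) / 4^n := by
    rw [Finset.sum_div]
    apply Finset.sum_congr rfl
    intro i hi
    simp only [Finset.mem_range] at hi
    have hin : i ≤ n := by omega
    unfold qq
    rw [div_mul_div_comm, ← pow_add]
    congr 2
    omega
  rw [this]
  rw [show (∑ i ∈ range (n+1), (Nat.centralBinom i : ℝ) * (Nat.centralBinom (n-i) : ℝ))
      = ((∑ i ∈ range (n+1), Nat.centralBinom i * Nat.centralBinom (n-i) : ℕ) : ℝ) by push_cast; rfl]
  rw [h]
  push_cast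
  field_simp

lemma summable_qq_geom {z : ℝ} (hz0 : 0 ≤ z) (hz1 : z < 1) :
    Summable (fun m : ℕ => qq m * z ^ m) := by
  apply Summable.of_nonneg_of_le (fun m => mul_nonneg (qq_pos m).le (pow_nonneg hz0 m))
    (fun m => mul_le_of_le_one_left (pow_nonneg hz0 m) (qq_le_one m))
  exact summable_geometric_of_lt_one hz0 hz1

lemma S_sq {z : ℝ} (hz0 : 0 ≤ z) (hz1 : z < 1) :
    (∑' m : ℕ, qq m * z ^ m) * (∑' m : ℕ, qq m * z ^ m) * (1 - z) = 1 := by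
  have hs : Summable (fun m : ℕ => ‖qq m * z ^ m‖) := by
    apply Summable.congr (summable_qq_geom hz0 hz1)
    intro m
    rw [Real.norm_eq_abs, abs_of_nonneg (mul_nonneg (qq_pos m).le (pow_nonneg hz0 m))]
  have hC := tsum_mul_tsum_eq_tsum_sum_range_of_summable_norm hs hs
  rw [hC]
  have hconv : ∀ n : ℕ, ∑ k ∈ range (n+1), (qq k * z ^ k) * (qq (n-k) * z ^ (n-k)) = z ^ n := by
    intro n
    have : ∀ k ∈ range (n+1), (qq k * z ^ k) * (qq (n-k) * z ^ (n-k)) = (qq k * qq (n-k)) * z ^ n := by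
      intro k hk
      simp only [Finset.mem_range] at hk
      rw [show (qq k * z ^ k) * (qq (n-k) * z ^ (n-k)) = (qq k * qq (n-k)) * (z^k * z^(n-k)) from by ring]
      rw [← pow_add]
      congr 2
      omega
    rw [Finset.sum_congr rfl this, ← Finset.sum_mul, qq_conv, one_mul]
  calc (∑' n : ℕ, ∑ k ∈ range (n+1), (qq k * z ^ k) * (qq (n-k) * z ^ (n-k))) * (1-z)
      = (∑' n : ℕ, z ^ n) * (1-z) := by rw [tsum_congr hconv]
    _ = 1 := by
        rw [tsum_geometric_of_lt_one hz0 hz1]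
        rw [inv_mul_cancel₀ (by linarith : (1:ℝ) - z ≠ 0)]

lemma S_val {z t : ℝ} (hz0 : 0 ≤ z) (hz1 : z < 1) (ht : 0 < t) (htz : t^2 = 1 - z) :
    (∑' m : ℕ, qq m * z ^ m) * t = 1 := by
  set S := ∑' m : ℕ, qq m * z ^ m with hS
  have hSnn : 0 ≤ S := tsum_nonneg (fun m => mul_nonneg (qq_pos m).le (pow_nonneg hz0 m))
  have h1 : (S * t)^2 = 1 := by
    have := S_sq hz0 hz1
    rw [← hS] at this
    nlinarith [this, htz]
  nlinarith [h1, mul_nonneg hSnn (le_of_lt ht), sq_nonneg (S*t - 1)]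

lemma G_val {z t : ℝ} (hz0 : 0 ≤ z) (hz1 : z < 1) (ht : 0 < t) (htz : t^2 = 1 - z) (k : ℕ) :
    (∑' m, gterm z k m) * t ^ (2*k+1) = 1 := by
  induction k with
  | zero =>
    have h0 : ∀ m, gterm z 0 m = qq m * z ^ m := by
      intro m
      unfold gterm
      rw [show ((1:ℝ)/2 + ((0:ℕ):ℝ)) = 1/2 by norm_num, poch_half m]
      have hf : (m.factorial : ℝ) ≠ 0 := by exact_mod_cast m.factorial_ne_zero
      field_simp
    rw [tsum_congr h0]
    simpa using S_val hz0 hz1 ht htz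
  | succ k ih =>
    rw [G_rec hz0 hz1 k] at ih
    have : t^(2*(k+1)+1) = t^(2*k+1) * t^2 := by ring
    rw [this, htz]
    calc (∑' m, gterm z (k+1) m) * (t^(2*k+1) * (1-z))
        = ((1-z) * ∑' m, gterm z (k+1) m) * t^(2*k+1) := by ring
      _ = 1 := ih

end Series

/-- For `β ≥ λ > 0` and `s : ℕ`,
`∫_{-π}^{π} (cos²θ/β² + sin²θ/λ²)^s dθ = (2πλ/β^(1+2s)) ₂F₁(1/2, 1+s; 1; 1-λ²/β²)`. -/
theorem angular_integral_hypergeometric (β lam : ℝ) (s : ℕ)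
    (hβ : β ≥ lam) (hlam : lam > 0) :
    ∫ θ in (-π)..π, (Real.cos θ ^ 2 / β ^ 2 + Real.sin θ ^ 2 / lam ^ 2) ^ s
      = (2 * π * lam / β ^ (1 + 2 * s)) *
        twoF1 (1 / 2) (1 + s) 1 (1 - lam ^ 2 / β ^ 2) := by
  have hβ0 : 0 < β := lt_of_lt_of_le hlam hβ
  set z : ℝ := 1 - lam ^ 2 / β ^ 2 with hzdef
  have hz1 : z < 1 := by
    rw [hzdef]
    have : 0 < lam^2 / β^2 := by positivity
    linarith
  have hz0 : 0 ≤ z := by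
    rw [hzdef]
    have h1 : lam^2 ≤ β^2 := by nlinarith
    have h2 : lam^2/β^2 ≤ 1 := by
      rw [div_le_one (by positivity)]
      exact h1
    linarith
  set t : ℝ := lam / β with htdef
  have ht : 0 < t := by rw [htdef]; positivity
  have htz : t^2 = 1 - z := by
    rw [htdef, hzdef]
    field_simp
    ring
  -- Step 1: simplify twoF1 terms
  have step1 : twoF1 (1/2) (1+s) 1 z
      = ∑' n : ℕ, (((s+n).choose n : ℝ)) * qq n * z ^ n := by
    unfold twoF1
    apply tsum_congr
    intro n
    rw [poch_half n, poch_one_eval n, poch_nat_choose s n]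
    have hf : (n.factorial : ℝ) ≠ 0 := by exact_mod_cast n.factorial_ne_zero
    field_simp
  -- summability of inner series (for each k)
  have hsuminner : ∀ k : ℕ, Summable (fun n : ℕ => ((n.choose k : ℝ)) * qq n * z ^ n) := by
    intro k
    apply Summable.of_nonneg_of_le
      (fun n => by
        have := (qq_pos n).le
        positivity)
      (fun n => ?_)
      (summable_choose_geom hz0 hz1 k)
    have h1 : ((n.choose k : ℝ)) ≤ ((n+k).choose k : ℝ) := by
      exact_mod_cast Nat.choose_le_choose k (by omega)
    have h2 : ((n.choose k : ℝ)) * qq n ≤ ((n+k).choose k : ℝ) := by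
      calc ((n.choose k : ℝ)) * qq n ≤ ((n.choose k : ℝ)) * 1 := by
            apply mul_le_mul_of_nonneg_left (qq_le_one n) (by positivity)
        _ ≤ ((n+k).choose k : ℝ) := by rw [mul_one]; exact h1
    calc ((n.choose k : ℝ)) * qq n * z ^ n ≤ ((n+k).choose k : ℝ) * z ^ n := by
          apply mul_le_mul_of_nonneg_right h2 (pow_nonneg hz0 n)
      _ ≤ ((n+k).choose k : ℝ) * z ^ n := le_refl _
  -- Step 2+3+4
  have step2 : twoF1 (1/2) (1+s) 1 z
      = ∑ k ∈ range (s+1), ((s.choose k : ℝ)) * (qq k * z^k * (t^(2*k+1))⁻¹) := by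
    rw [step1]
    have e1 : ∀ n : ℕ, (((s+n).choose n : ℝ)) * qq n * z ^ n
        = ∑ k ∈ range (s+1), ((s.choose k : ℝ)) * (((n.choose k : ℝ)) * qq n * z ^ n) := by
      intro n
      rw [vandermonde_real s n, Finset.sum_mul, Finset.sum_mul]
      apply Finset.sum_congr rfl
      intro k _
      ring
    rw [tsum_congr e1]
    rw [Summable.tsum_finsetSum (fun k _ => (hsuminner k).mul_left _)]
    apply Finset.sum_congr rfl
    intro k _
    rw [tsum_mul_left]
    congr 1
    -- ∑' n, C(n,k) qq n z^n = qq k * z^k * (t^(2k+1))⁻¹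
    have hinj : Function.Injective (fun m : ℕ => m + k) := add_left_injective k
    have hsupp : ∀ n : ℕ, n ∉ Set.range (fun m : ℕ => m + k) →
        ((n.choose k : ℝ)) * qq n * z ^ n = 0 := by
      intro n hn
      have hk : n < k := by
        by_contra hcon
        push_neg at hcon
        exact hn ⟨n - k, show n - k + k = n by omega⟩
      rw [Nat.choose_eq_zero_of_lt hk]
      simp
    have hsub : (Function.support fun n : ℕ => ((n.choose k : ℝ)) * qq n * z ^ n)
        ⊆ Set.range (fun m : ℕ => m + k) := by
      intro n hn
      by_contra hmem
      exact (Function.mem_support.mp hn) (hsupp n hmem)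
    rw [← Function.Injective.tsum_eq hinj hsub]
    have e2 : ∀ m : ℕ, (((m+k).choose k : ℝ)) * qq (m+k) * z ^ (m+k)
        = qq k * z^k * gterm z k m := by
      intro m
      have hr := ratio_lem k m
      have hf : (m.factorial : ℝ) ≠ 0 := by exact_mod_cast m.factorial_ne_zero
      have hr' : ((m+k).choose k : ℝ) * qq (m+k) = qq k * poch (1/2 + k) m / m.factorial := by
        rw [eq_div_iff hf]; exact hr
      unfold gterm
      rw [pow_add]
      linear_combination (z^m * z^k) * hr'
    calc ∑' m : ℕ, (((m+k).choose k : ℝ)) * qq (m+k) * z ^ (m+k)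
        = ∑' m : ℕ, qq k * z^k * gterm z k m := tsum_congr e2
      _ = qq k * z^k * ∑' m, gterm z k m := tsum_mul_left
      _ = qq k * z^k * (t^(2*k+1))⁻¹ := by
          congr 1
          have h := G_val hz0 hz1 ht htz k
          have htne : t^(2*k+1) ≠ 0 := by positivity
          field_simp at h ⊢
          linarith [h]
  -- Step 5: expand LHS
  set u : ℝ := 1/lam^2 - 1/β^2 with hudef
  have hu0 : 0 ≤ u := by
    rw [hudef]
    have h1 : lam^2 ≤ β^2 := by nlinarith
    have h2 : 1/β^2 ≤ 1/lam^2 := by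
      apply one_div_le_one_div_of_le (by positivity) h1
    linarith
  have hint : ∀ θ : ℝ, Real.cos θ ^ 2 / β ^ 2 + Real.sin θ ^ 2 / lam ^ 2
      = 1/β^2 + u * Real.sin θ ^ 2 := by
    intro θ
    rw [Real.cos_sq']
    rw [hudef]
    field_simp
    ring
  have step5 : ∫ θ in (-π)..π, (Real.cos θ ^ 2 / β ^ 2 + Real.sin θ ^ 2 / lam ^ 2) ^ s
      = ∑ k ∈ range (s+1), (u^k * (1/β^2)^(s-k) * (s.choose k : ℝ)) * (2 * π * qq k) := by
    have e3 : ∀ θ : ℝ, (Real.cos θ ^ 2 / β ^ 2 + Real.sin θ ^ 2 / lam ^ 2) ^ s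
        = ∑ k ∈ range (s+1), (u^k * (1/β^2)^(s-k) * (s.choose k : ℝ)) * Real.sin θ ^ (2*k) := by
      intro θ
      rw [hint θ, add_comm ((1:ℝ)/β^2), add_pow]
      apply Finset.sum_congr rfl
      intro k _
      rw [mul_pow, pow_mul]
      ring
    rw [intervalIntegral.integral_congr (fun θ _ => e3 θ)]
    rw [intervalIntegral.integral_finset_sum (fun k _ => (Continuous.intervalIntegrable (by continuity) _ _))]
    apply Finset.sum_congr rfl
    intro k _
    rw [intervalIntegral.integral_const_mul, sin_int k]
  -- Step 6: combine
  rw [step5, step2, Finset.mul_sum]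
  apply Finset.sum_congr rfl
  intro k hk
  simp only [Finset.mem_range] at hk
  obtain ⟨j, hj⟩ : ∃ j, s = k + j := ⟨s - k, by omega⟩
  subst hj
  have hsk : k + j - k = j := by omega
  rw [hsk, htdef, hudef, hzdef]
  have hβne : (β:ℝ) ≠ 0 := ne_of_gt hβ0
  have hlamne : (lam:ℝ) ≠ 0 := ne_of_gt hlam
  rw [div_pow]
  field_simp
  simp only [div_pow]
  field_simp
  ring
end

section
/- For real a, b with 0 < b < a < b√2 (so that |1 − a²/b²| < 1, i.e. a²/b² < 2), 4π a² · ₂F₁(2, 1/2; 3/2; 1 − a²/b²) = 2π b² (1 + (a²/(b√(a²−b²))) · arctan(√((a²−b²)/b²))). -/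
open Real

lemma poch_pos {a : ℝ} (ha : 0 < a) (n : ℕ) : 0 < poch a n := by
  induction n with
  | zero => simp [poch]
  | succ k ih =>
    rw [poch, ascPochhammer_succ_eval]
    exact mul_pos ih (by positivity)

lemma coeff_eq (n : ℕ) :
    poch 2 n * poch (1/2) n / poch (3/2) n / (Nat.factorial n : ℝ)
      = (n + 1) / (2 * n + 1) := by
  induction n with
  | zero => simp [poch]
  | succ k ih =>
    have h1 : (0:ℝ) < poch (3/2) k := poch_pos (by norm_num) k
    have h2 : (0:ℝ) < poch (3/2) (k+1) := poch_pos (by norm_num) (k+1)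
    have hf : (0:ℝ) < (Nat.factorial k : ℝ) := by positivity
    have hs : (Nat.factorial (k+1) : ℝ) = (k+1) * Nat.factorial k := by
      push_cast [Nat.factorial_succ]; ring
    have h3 : poch (3/2) (k+1) = poch (3/2) k * (3/2 + k) := by
      rw [poch, poch, ascPochhammer_succ_eval]
    have h4 : poch 2 (k+1) = poch 2 k * (2 + k) := by
      rw [poch, poch, ascPochhammer_succ_eval]
    have h5 : poch (1/2) (k+1) = poch (1/2) k * (1/2 + k) := by
      rw [poch, poch, ascPochhammer_succ_eval]
    have hk1 : (0:ℝ) < 2 * k + 1 := by positivity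
    rw [h3, h4, h5, hs]
    have key : poch 2 k * poch (1/2) k = ((k:ℝ) + 1) / (2 * k + 1) * (poch (3/2) k * Nat.factorial k) := by
      field_simp at ih ⊢
      linarith [ih]
    rw [show poch 2 k * (2 + (k:ℝ)) * (poch (1/2) k * (1/2 + (k:ℝ)))
        = poch 2 k * poch (1/2) k * ((2 + (k:ℝ)) * (1/2 + (k:ℝ))) by ring, key]
    push_cast
    field_simp
    ring

/-- For `0 < b < a < b√2`,
`4πa² ₂F₁(2, 1/2; 3/2; 1−a²/b²) = 2πb²(1 + (a²/(b√(a²−b²))) arctan(√((a²−b²)/b²)))`. -/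
theorem prolate_spheroid_surface_small_ecc (a b : ℝ) (hb : 0 < b) (hba : b < a)
    (hab : a < b * Real.sqrt 2) :
    4 * π * a ^ 2 * twoF1 2 (1 / 2) (3 / 2) (1 - a ^ 2 / b ^ 2)
      = 2 * π * b ^ 2 * (1 + a ^ 2 / (b * Real.sqrt (a ^ 2 - b ^ 2)) *
          Real.arctan (Real.sqrt ((a ^ 2 - b ^ 2) / b ^ 2))) := by
  have ha : 0 < a := hb.trans hba
  have hdiff : 0 < a ^ 2 - b ^ 2 := by nlinarith
  have hs : 0 < Real.sqrt (a ^ 2 - b ^ 2) := Real.sqrt_pos.mpr hdiff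
  set t : ℝ := Real.sqrt (a ^ 2 - b ^ 2) / b with ht_def
  have ht : 0 < t := div_pos hs hb
  have ht2 : t ^ 2 = (a ^ 2 - b ^ 2) / b ^ 2 := by
    rw [ht_def, div_pow, Real.sq_sqrt hdiff.le]
  have ha2 : a ^ 2 < 2 * b ^ 2 := by
    have := Real.sq_sqrt (by norm_num : (2:ℝ) ≥ 0)
    nlinarith [Real.sqrt_nonneg 2, Real.sq_sqrt (by norm_num : (0:ℝ) ≤ 2)]
  have ht2lt : t ^ 2 < 1 := by rw [ht2]; rw [div_lt_one (by positivity)]; nlinarith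
  have ht1 : t < 1 := by nlinarith
  have hz : 1 - a ^ 2 / b ^ 2 = -t ^ 2 := by rw [ht2]; field_simp; ring
  -- the argument of arctan is t
  have harg : Real.sqrt ((a ^ 2 - b ^ 2) / b ^ 2) = t := by
    rw [← ht2, Real.sqrt_sq ht.le]
  -- sum the series
  have hgeo : HasSum (fun n : ℕ => (-t ^ 2) ^ n / 2) (b ^ 2 / a ^ 2 / 2) := by
    have h1 : HasSum (fun n : ℕ => (-t ^ 2) ^ n) (b ^ 2 / a ^ 2) := by
      have := hasSum_geometric_of_norm_lt_one (ξ := -t ^ 2)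
        (by rw [norm_neg, Real.norm_eq_abs, abs_of_pos (by positivity)]; exact ht2lt)
      have h1t : (1 - -t ^ 2)⁻¹ = b ^ 2 / a ^ 2 := by
        rw [sub_neg_eq_add, ht2]
        rw [show 1 + (a ^ 2 - b ^ 2) / b ^ 2 = a ^ 2 / b ^ 2 by field_simp; ring]
        rw [inv_div]
      rwa [h1t] at this
    exact h1.div_const 2
  have harc : HasSum (fun n : ℕ => (-t ^ 2) ^ n / (2 * (2 * n + 1)))
      (Real.arctan t / t / 2) := by
    have h1 : HasSum (fun n : ℕ => (-1 : ℝ) ^ n * t ^ (2 * n + 1) / (2 * n + 1))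
        (Real.arctan t) := by
      exact_mod_cast Real.hasSum_arctan (by rw [Real.norm_eq_abs, abs_of_pos ht]; exact ht1)
    have h2 := (h1.div_const t).div_const 2
    convert h2 using 2 with n
    · rfl
    have : t ^ (2 * n + 1) = (t ^ 2) ^ n * t := by rw [← pow_mul, pow_succ]
    rw [this, neg_pow]
    field_simp
  have hsum : HasSum (fun n : ℕ =>
      poch 2 n * poch (1/2) n / poch (3/2) n * (1 - a ^ 2 / b ^ 2) ^ n / (Nat.factorial n))
      (b ^ 2 / a ^ 2 / 2 + Real.arctan t / t / 2) := by
    have := hgeo.add harc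
    convert this using 2 with n
    have hk1 : (0:ℝ) < 2 * n + 1 := by positivity
    have hfac : (0:ℝ) < (Nat.factorial n : ℝ) := by positivity
    have h3 : (0:ℝ) < poch (3/2) n := poch_pos (by norm_num) n
    have key := coeff_eq n
    rw [hz, div_div] at *
    rw [show poch 2 n * poch (1/2) n / poch (3/2) n * (-t ^ 2) ^ n / (Nat.factorial n : ℝ)
        = poch 2 n * poch (1/2) n / (poch (3/2) n * (Nat.factorial n : ℝ)) * (-t ^ 2) ^ n by
          ring, key]
    field_simp
    ring
  rw [twoF1, hsum.tsum_eq, harg]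
  have hb2 : b * Real.sqrt (a ^ 2 - b ^ 2) = b ^ 2 * t := by
    rw [ht_def]; field_simp
  rw [hb2]
  field_simp
  ring
end
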